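/- Suppose that for each N ≥ 1, X_N and U_N are ensembles of size N of ℝ^n-valued random vectors such that the stacked ensemble [X_N; U_N] is exchangeable, the members of U_N are i.i.d., the random vector U_{N1} is in L⁴ and has the same distribution for all N, and ‖X_{N1} − U_{N1}‖₄ → 0 as N → ∞. Then, as N → ∞, the sample mean X̄_N converges in probability to E(U_{N1}) and the sample covariance C(X_N) converges in probability to Cov(U_{N1}). -/

import Mathlib

open MeasureTheory ProbabilityTheory Matrix Filter
open scoped ENNReal NNReal

noncomputable section

variable {Ω : Type*} [MeasureSpace Ω] [IsProbabilityMeasure (ℙ : Measure Ω)]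

/-- A vector in `ℝ^n` viewed as an element of Euclidean space, so that `‖toEuc x‖`
is the Euclidean norm of `x`. -/
def toEuc {n : ℕ} (x : Fin n → ℝ) : EuclideanSpace ℝ (Fin n) :=
  (WithLp.equiv 2 (Fin n → ℝ)).symm x

/-- A matrix viewed as a continuous linear map between Euclidean spaces, so that
`‖opCLM M‖` is the operator (spectral) norm of `M` induced by the Euclidean norm. -/
def opCLM {m n : ℕ} (M : Matrix (Fin m) (Fin n) ℝ) :
    EuclideanSpace ℝ (Fin n) →L[ℝ] EuclideanSpace ℝ (Fin m) :=
  LinearMap.toContinuousLinearMap (Matrix.toEuclideanLin M)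

/-- The stochastic `L^p` norm `(E ‖X‖^p)^(1/p)` (Euclidean norm) of a random vector. -/
def vLp {n : ℕ} (p : ℝ) (X : Ω → Fin n → ℝ) : ℝ≥0∞ :=
  eLpNorm (fun ω => toEuc (X ω)) (ENNReal.ofReal p) ℙ

/-- The stochastic `L^p` norm `(E ‖X‖^p)^(1/p)` (operator norm) of a random matrix. -/
def mLp {m n : ℕ} (p : ℝ) (M : Ω → Matrix (Fin m) (Fin n) ℝ) : ℝ≥0∞ :=
  eLpNorm (fun ω => opCLM (M ω)) (ENNReal.ofReal p) ℙ

/-- An ensemble (family of random elements indexed by `Fin N`) is exchangeable if its joint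
distribution is invariant under every permutation of the members. -/
def Exchangeable {α : Type*} [MeasurableSpace α] {N : ℕ} (X : Fin N → Ω → α) : Prop :=
  ∀ σ : Equiv.Perm (Fin N),
    Measure.map (fun ω i => X (σ i) ω) (ℙ : Measure Ω)
      = Measure.map (fun ω i => X i ω) (ℙ : Measure Ω)

/-- Ensemble sample mean `X̄_N = (1/N) ∑ᵢ X_{Ni}`. -/
def sampleMean {n N : ℕ} (X : Fin N → Ω → Fin n → ℝ) (ω : Ω) : Fin n → ℝ :=
  (N : ℝ)⁻¹ • ∑ i, X i ω

/-- Ensemble sample covariance `C(X_N) = (1/N) ∑ᵢ X_{Ni} X_{Ni}ᵀ − X̄_N X̄_Nᵀ`. -/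
def sampleCov {n N : ℕ} (X : Fin N → Ω → Fin n → ℝ) (ω : Ω) : Matrix (Fin n) (Fin n) ℝ :=
  (N : ℝ)⁻¹ • ∑ i, vecMulVec (X i ω) (X i ω)
    - vecMulVec (sampleMean X ω) (sampleMean X ω)

/-- `μ` is the multivariate Gaussian distribution `N(u, Q)` on `ℝ^n`: every linear functional
`x ↦ ⟨l, x⟩` is a real Gaussian with mean `⟨l, u⟩` and variance `lᵀ Q l`
(the Cramér–Wold characterization). -/
def IsGaussianVec {n : ℕ} (μ : Measure (Fin n → ℝ)) (u : Fin n → ℝ)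
    (Q : Matrix (Fin n) (Fin n) ℝ) : Prop :=
  ∀ l : Fin n → ℝ,
    Measure.map (fun x => ∑ i, l i * x i) μ
      = gaussianReal (∑ i, l i * u i) (Real.toNNReal (l ⬝ᵥ Q.mulVec l))

/-- Covariance of two real random variables, `Cov(X, Y) = E(XY) − E(X)E(Y)`. -/
def cov (X Y : Ω → ℝ) : ℝ :=
  (∫ ω, X ω * Y ω) - (∫ ω, X ω) * (∫ ω, Y ω)

/-- Covariance matrix `Cov(X, Y) = E(X Yᵀ) − E(X) E(Y)ᵀ` of two random vectors. -/
def covMat {n m : ℕ} (X : Ω → Fin n → ℝ) (Y : Ω → Fin m → ℝ) :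
    Matrix (Fin n) (Fin m) ℝ :=
  fun i j => cov (fun ω => X ω i) (fun ω => Y ω j)

/-!
Exchangeability makes every pair `(X_{Ni}, U_{Ni})` distributed like `(X_{N1}, U_{N1})`, so for
`f` a coordinate or a product of two coordinates, the ensemble means of `f(X_{Ni})` and of
`f(U_{Ni})` differ in `L¹` by at most `‖f(X_{N1}) - f(U_{N1})‖₁`, which tends to `0` (for the
products by Cauchy–Schwarz). The ensemble mean of the i.i.d. `f(U_{Ni})`, square-integrable since
`U ∈ L⁴`, converges in probability to its expectation by Chebyshev's inequality. Sample mean and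
sample covariance are continuous functions of these first and second ensemble moments, and
convergence in probability to a constant survives continuous maps.
-/

namespace MeasureTheory

variable {α ι E F : Type*} {mα : MeasurableSpace α} {μ : Measure α} {l : Filter ι}

theorem TendstoInMeasure.comp_continuousAt [PseudoMetricSpace E] [PseudoMetricSpace F]
    {f : ι → α → E} {c : E} {φ : E → F} (hf : TendstoInMeasure μ f l fun _ => c)
    (hφ : ContinuousAt φ c) : TendstoInMeasure μ (fun i x => φ (f i x)) l fun _ => φ c := by
  rw [tendstoInMeasure_iff_dist] at hf ⊢
  intro ε hε
  obtain ⟨δ, hδ, hφδ⟩ := Metric.continuousAt_iff.1 hφ ε hε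
  refine tendsto_of_tendsto_of_tendsto_of_le_of_le tendsto_const_nhds (hf δ hδ)
    (fun _ => zero_le) fun i => measure_mono fun x hx => ?_
  exact le_of_not_gt fun hlt => (hφδ hlt).not_ge hx

theorem TendstoInMeasure.prodMk [PseudoEMetricSpace E] [PseudoEMetricSpace F]
    {f : ι → α → E} {g : ι → α → F} {f' : α → E} {g' : α → F}
    (hf : TendstoInMeasure μ f l f') (hg : TendstoInMeasure μ g l g') :
    TendstoInMeasure μ (fun i x => (f i x, g i x)) l fun x => (f' x, g' x) := by
  intro ε hε
  refine tendsto_of_tendsto_of_tendsto_of_le_of_le tendsto_const_nhds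
    (by simpa using (hf ε hε).add (hg ε hε)) (fun _ => zero_le)
    fun i => (measure_mono fun x hx => ?_).trans (measure_union_le _ _)
  simpa [Prod.edist_eq, le_max_iff] using hx

theorem tendstoInMeasure_pi {κ : Type*} [Fintype κ] {E : κ → Type*}
    [∀ k, PseudoEMetricSpace (E k)] {f : ι → α → ∀ k, E k} {g : α → ∀ k, E k}
    (h : ∀ k, TendstoInMeasure μ (fun i x => f i x k) l fun x => g x k) :
    TendstoInMeasure μ f l g := by
  intro ε hε
  refine tendsto_of_tendsto_of_tendsto_of_le_of_le tendsto_const_nhds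
    (by simpa using tendsto_finsetSum Finset.univ fun k _ => h k ε hε) (fun _ => zero_le)
    fun i => (measure_mono fun x hx => ?_).trans (measure_iUnion_fintype_le μ _)
  rw [Set.mem_ofPred_eq, edist_pi_def, Finset.le_sup_iff hε] at hx
  obtain ⟨k, -, hk⟩ := hx
  exact Set.mem_iUnion_of_mem k hk

theorem eLpNorm_mul_le_eLpNorm_two_mul_eLpNorm_two {f g : α → ℝ}
    (hf : AEStronglyMeasurable f μ) (hg : AEStronglyMeasurable g μ) :
    eLpNorm (f * g) 1 μ ≤ eLpNorm f 2 μ * eLpNorm g 2 μ := by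
  have h := eLpNorm_smul_le_mul_eLpNorm (p := 2) (q := 2) (r := 1) hg hf
  exact h

theorem tendsto_eLpNorm_mul_sub_mul {x y u v : ι → α → ℝ}
    (hx : ∀ i, AEStronglyMeasurable (x i) μ) (hy : ∀ i, AEStronglyMeasurable (y i) μ)
    (hu : ∀ i, AEStronglyMeasurable (u i) μ) (hv : ∀ i, AEStronglyMeasurable (v i) μ)
    {C D : ℝ≥0∞} (hC : C ≠ ∞) (hD : D ≠ ∞) (huC : ∀ i, eLpNorm (u i) 2 μ ≤ C)
    (hvD : ∀ i, eLpNorm (v i) 2 μ ≤ D)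
    (hxu : Tendsto (fun i => eLpNorm (x i - u i) 2 μ) l (nhds 0))
    (hyv : Tendsto (fun i => eLpNorm (y i - v i) 2 μ) l (nhds 0)) :
    Tendsto (fun i => eLpNorm (x i * y i - u i * v i) 1 μ) l (nhds 0) := by
  have hbound : Tendsto (fun i => eLpNorm (x i - u i) 2 μ * eLpNorm (y i - v i) 2 μ
      + eLpNorm (x i - u i) 2 μ * D + C * eLpNorm (y i - v i) 2 μ) l (nhds 0) := by
    simpa using ((ENNReal.Tendsto.mul hxu (Or.inr ENNReal.zero_ne_top) hyv
      (Or.inr ENNReal.zero_ne_top)).add (ENNReal.Tendsto.mul_const hxu (Or.inr hD))).add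
      (ENNReal.Tendsto.const_mul hyv (Or.inr hC))
  refine tendsto_of_tendsto_of_tendsto_of_le_of_le tendsto_const_nhds hbound (fun _ => zero_le)
    fun i => ?_
  have hxu' := (hx i).sub (hu i)
  have hyv' := (hy i).sub (hv i)
  calc eLpNorm (x i * y i - u i * v i) 1 μ
      = eLpNorm ((x i - u i) * (y i - v i) + (x i - u i) * v i + u i * (y i - v i)) 1 μ := by
        congr 1; ring
    _ ≤ eLpNorm ((x i - u i) * (y i - v i)) 1 μ + eLpNorm ((x i - u i) * v i) 1 μ
        + eLpNorm (u i * (y i - v i)) 1 μ := by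
        refine (eLpNorm_add_le ((hxu'.mul hyv').add (hxu'.mul (hv i))) ((hu i).mul hyv')
          le_rfl).trans ?_
        gcongr
        exact eLpNorm_add_le (hxu'.mul hyv') (hxu'.mul (hv i)) le_rfl
    _ ≤ _ := by
        gcongr
        · exact eLpNorm_mul_le_eLpNorm_two_mul_eLpNorm_two hxu' hyv'
        · exact (eLpNorm_mul_le_eLpNorm_two_mul_eLpNorm_two hxu' (hv i)).trans
            (by gcongr; exact hvD i)
        · exact (eLpNorm_mul_le_eLpNorm_two_mul_eLpNorm_two (hu i) hyv').trans
            (by gcongr; exact huC i)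

end MeasureTheory

def ensembleMean {α : Type*} {N : ℕ} (Y : Fin N → α → ℝ) (ω : α) : ℝ :=
  (N : ℝ)⁻¹ * ∑ i, Y i ω

theorem sampleMean_apply {α : Type*} {n N : ℕ} (X : Fin N → α → Fin n → ℝ) (ω : α) (j : Fin n) :
    sampleMean X ω j = ensembleMean (fun i ω => X i ω j) ω := by
  simp [sampleMean, ensembleMean, Finset.sum_apply]

namespace ProbabilityTheory

variable {α : Type*} {mα : MeasurableSpace α} {μ : Measure α}

theorem eLpNorm_ensembleMean_le {p : ℝ≥0∞} (hp : 1 ≤ p) {N : ℕ} {Y : Fin N → α → ℝ}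
    (hY : ∀ i, AEStronglyMeasurable (Y i) μ) {B : ℝ≥0∞} (hB : ∀ i, eLpNorm (Y i) p μ ≤ B) :
    eLpNorm (ensembleMean Y) p μ ≤ B := by
  have hsmul : ensembleMean Y = (N : ℝ)⁻¹ • ∑ i, Y i := by
    ext ω
    simp [ensembleMean, Finset.sum_apply]
  rcases N.eq_zero_or_pos with rfl | hN
  · simp [hsmul]
  calc eLpNorm (ensembleMean Y) p μ
      ≤ ‖(N : ℝ)⁻¹‖ₑ * ∑ _i : Fin N, B := by
        rw [hsmul, eLpNorm_const_smul]
        gcongr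
        exact (eLpNorm_sum_le (fun i _ => hY i) hp).trans (Finset.sum_le_sum fun i _ => hB i)
    _ = B := by
        rw [Finset.sum_const, Finset.card_univ, Fintype.card_fin, nsmul_eq_mul, ← mul_assoc,
          Real.enorm_eq_ofReal (by positivity), ENNReal.ofReal_inv_of_pos (by positivity),
          ENNReal.ofReal_natCast, ENNReal.inv_mul_cancel (by positivity) (by simp), one_mul]

theorem tendstoInMeasure_ensembleMean_of_iid [IsProbabilityMeasure μ]
    {Z : (N : ℕ) → Fin (N + 1) → α → ℝ} {ζ : α → ℝ} (hind : ∀ N, iIndepFun (Z N) μ)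
    (hident : ∀ N i, IdentDistrib (Z N i) ζ μ μ) (hζ : MemLp ζ 2 μ) :
    TendstoInMeasure μ (fun N => ensembleMean (Z N)) atTop fun _ => μ[ζ] := by
  have hmem : ∀ N i, MemLp (Z N i) 2 μ := fun N i => (hident N i).symm.memLp_snd hζ
  have hmemMean : ∀ N, MemLp (ensembleMean (Z N)) 2 μ := fun N =>
    (memLp_finsetSum _ fun i _ => hmem N i).const_mul _
  have hmean : ∀ N, μ[ensembleMean (Z N)] = μ[ζ] := by
    intro N
    simp only [ensembleMean, integral_const_mul]
    rw [integral_finsetSum _ fun i _ => (hmem N i).integrable one_le_two]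
    simp only [fun i => (hident N i).integral_eq, Finset.sum_const, Finset.card_univ,
      Fintype.card_fin, nsmul_eq_mul]
    field_simp
  have hvar : ∀ N, Var[ensembleMean (Z N); μ] = Var[ζ; μ] / (N + 1) := by
    intro N
    unfold ensembleMean
    rw [variance_const_mul, ← Finset.sum_fn,
      IndepFun.variance_sum (fun i _ => hmem N i) fun i _ j _ hij => (hind N).indepFun hij]
    simp only [fun i => (hident N i).variance_eq, Finset.sum_const, Finset.card_univ,
      Fintype.card_fin, nsmul_eq_mul]
    push_cast
    field_simp
  rw [tendstoInMeasure_iff_dist]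
  intro ε hε
  have hbound : Tendsto (fun N : ℕ => ENNReal.ofReal (Var[ζ; μ] / (N + 1) / ε ^ 2)) atTop
      (nhds 0) := by
    have := ((tendsto_one_div_add_atTop_nhds_zero_nat (𝕜 := ℝ)).const_mul Var[ζ; μ]).div_const
      (ε ^ 2)
    simpa [div_eq_mul_inv] using ENNReal.tendsto_ofReal this
  refine tendsto_of_tendsto_of_tendsto_of_le_of_le tendsto_const_nhds hbound (fun _ => zero_le)
    fun N => ?_
  rw [← hvar, ← hmean]
  exact meas_ge_le_variance_div_sq (hmemMean N) hε

theorem tendstoInMeasure_ensembleMean_of_tendsto_eLpNorm_sub [IsProbabilityMeasure μ]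
    {Y Z : (N : ℕ) → Fin (N + 1) → α → ℝ} {ζ : α → ℝ}
    (hdiff : ∀ N i, IdentDistrib (Y N i - Z N i) (Y N 0 - Z N 0) μ μ)
    (hind : ∀ N, iIndepFun (Z N) μ) (hident : ∀ N i, IdentDistrib (Z N i) ζ μ μ)
    (hζ : MemLp ζ 2 μ) (hYZ : Tendsto (fun N => eLpNorm (Y N 0 - Z N 0) 1 μ) atTop (nhds 0)) :
    TendstoInMeasure μ (fun N => ensembleMean (Y N)) atTop fun _ => μ[ζ] := by
  have herr : TendstoInMeasure μ (fun N => ensembleMean fun i => Y N i - Z N i) atTop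
      fun _ => 0 := by
    refine tendstoInMeasure_of_tendsto_eLpNorm one_ne_zero (fun N => ?_)
      aestronglyMeasurable_const ?_
    · exact (Finset.aestronglyMeasurable_fun_sum _ fun i _ =>
        (hdiff N i).aestronglyMeasurable_fst).const_mul _
    refine tendsto_of_tendsto_of_tendsto_of_le_of_le tendsto_const_nhds hYZ (fun _ => zero_le)
      fun N => ?_
    rw [show (fun _ : α => (0 : ℝ)) = 0 from rfl, sub_zero]
    exact eLpNorm_ensembleMean_le le_rfl (fun i => (hdiff N i).aestronglyMeasurable_fst)
      fun i => ((hdiff N i).eLpNorm_eq 1).le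
  convert (herr.prodMk (tendstoInMeasure_ensembleMean_of_iid hind hident hζ)).comp_continuousAt
    continuous_add.continuousAt using 2 with N
  · ext ω
    simp only [ensembleMean, Pi.sub_apply, Finset.sum_sub_distrib]
    ring
  · simp

theorem tendstoInMeasure_sampleMean_of_identDistrib_pairs [IsProbabilityMeasure μ] {n : ℕ}
    {X U : (N : ℕ) → Fin (N + 1) → α → Fin n → ℝ} {g : α → Fin n → ℝ}
    (hpair : ∀ N i, IdentDistrib (fun ω => (X N i ω, U N i ω)) (fun ω => (X N 0 ω, U N 0 ω)) μ μ)
    (hind : ∀ N, iIndepFun (U N) μ) (hident : ∀ N i, IdentDistrib (U N i) g μ μ)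
    (hg : ∀ j, MemLp (fun ω => g ω j) 2 μ)
    (hXU : ∀ j, Tendsto (fun N => eLpNorm (fun ω => X N 0 ω j - U N 0 ω j) 1 μ) atTop (nhds 0)) :
    TendstoInMeasure μ (fun N => sampleMean (X N)) atTop fun _ j => ∫ ω, g ω j ∂μ := by
  refine tendstoInMeasure_pi fun j => ?_
  simp only [sampleMean_apply]
  exact tendstoInMeasure_ensembleMean_of_tendsto_eLpNorm_sub
    (Y := fun N i ω => X N i ω j) (Z := fun N i ω => U N i ω j)
    (fun N i => (hpair N i).comp
      (u := fun p : (Fin n → ℝ) × (Fin n → ℝ) => p.1 j - p.2 j) (by fun_prop))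
    (fun N => (hind N).comp (fun _ v => v j) fun _ => measurable_pi_apply j)
    (fun N i => (hident N i).comp (measurable_pi_apply j)) (hg j) (hXU j)

theorem tendstoInMeasure_secondMoment_of_identDistrib_pairs [IsProbabilityMeasure μ] {n : ℕ}
    {X U : (N : ℕ) → Fin (N + 1) → α → Fin n → ℝ} {g : α → Fin n → ℝ}
    (hpair : ∀ N i, IdentDistrib (fun ω => (X N i ω, U N i ω)) (fun ω => (X N 0 ω, U N 0 ω)) μ μ)
    (hind : ∀ N, iIndepFun (U N) μ) (hident : ∀ N i, IdentDistrib (U N i) g μ μ)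
    (hg : ∀ j, MemLp (fun ω => g ω j) 4 μ)
    (hXU : ∀ j, Tendsto (fun N => eLpNorm (fun ω => X N 0 ω j - U N 0 ω j) 2 μ) atTop (nhds 0)) :
    TendstoInMeasure μ (fun N ω j k => ensembleMean (fun i ω => X N i ω j * X N i ω k) ω) atTop
      fun _ j k => ∫ ω, g ω j * g ω k ∂μ := by
  have : ENNReal.HolderTriple 4 4 2 := ⟨by
    rw [← two_mul, show (4 : ℝ≥0∞) = 2 * 2 by norm_num, ENNReal.mul_inv (by simp) (by simp),
      ← mul_assoc, ENNReal.mul_inv_cancel (by simp) (by simp), one_mul]⟩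
  have hX : ∀ N j, AEStronglyMeasurable (fun ω => X N 0 ω j) μ := fun N j =>
    ((hpair N 0).comp ((measurable_pi_apply j).comp measurable_fst)).aestronglyMeasurable_fst
  have hU : ∀ N j, AEStronglyMeasurable (fun ω => U N 0 ω j) μ := fun N j =>
    ((hident N 0).comp (measurable_pi_apply j)).aestronglyMeasurable_fst
  have hUnorm : ∀ N j, eLpNorm (fun ω => U N 0 ω j) 2 μ = eLpNorm (fun ω => g ω j) 2 μ :=
    fun N j => ((hident N 0).comp (measurable_pi_apply j)).eLpNorm_eq 2
  have hg2 : ∀ j, eLpNorm (fun ω => g ω j) 2 μ ≠ ∞ := fun j =>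
    ((hg j).mono_exponent (by norm_num)).eLpNorm_ne_top
  refine tendstoInMeasure_pi fun j => tendstoInMeasure_pi fun k => ?_
  refine tendstoInMeasure_ensembleMean_of_tendsto_eLpNorm_sub
    (Y := fun N i ω => X N i ω j * X N i ω k) (Z := fun N i ω => U N i ω j * U N i ω k)
    (fun N i => (hpair N i).comp
      (u := fun p : (Fin n → ℝ) × (Fin n → ℝ) => p.1 j * p.1 k - p.2 j * p.2 k) (by fun_prop))
    (fun N => (hind N).comp (fun _ v => v j * v k) fun _ => by fun_prop)
    (fun N i => (hident N i).comp (u := fun v : Fin n → ℝ => v j * v k) (by fun_prop))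
    ((hg k).mul (hg j)) ?_
  exact tendsto_eLpNorm_mul_sub_mul (fun N => hX N j) (fun N => hX N k) (fun N => hU N j)
    (fun N => hU N k) (hg2 j) (hg2 k) (fun N => (hUnorm N j).le) (fun N => (hUnorm N k).le)
    (hXU j) (hXU k)

end ProbabilityTheory

theorem Exchangeable.identDistrib {α β : Type*} [MeasureSpace α] [MeasurableSpace β] {N : ℕ}
    {X : Fin N → α → β} (hX : Exchangeable X) (hmeas : ∀ i, Measurable (X i)) (i j : Fin N) :
    IdentDistrib (X i) (X j) ℙ ℙ where
  aemeasurable_fst := (hmeas i).aemeasurable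
  aemeasurable_snd := (hmeas j).aemeasurable
  map_eq := by
    have h := congrArg (Measure.map fun v : Fin N → β => v j) (hX (Equiv.swap i j))
    rw [Measure.map_map (measurable_pi_apply j) (measurable_pi_lambda _ fun k => hmeas _),
      Measure.map_map (measurable_pi_apply j) (measurable_pi_lambda _ hmeas)] at h
    simpa only [Function.comp_def, Equiv.swap_apply_right] using h

theorem eLpNorm_apply_le_vLp {α : Type*} [MeasureSpace α] [IsProbabilityMeasure (ℙ : Measure α)]
    {n : ℕ} {f : α → Fin n → ℝ} (hf : Measurable f) {p : ℝ≥0∞} {q : ℝ}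
    (hpq : p ≤ ENNReal.ofReal q) (j : Fin n) : eLpNorm (fun ω => f ω j) p ℙ ≤ vLp q f :=
  (eLpNorm_le_eLpNorm_of_exponent_le hpq (hf.eval (a := j)).aestronglyMeasurable).trans
    (eLpNorm_mono fun ω => PiLp.norm_apply_le (toEuc (f ω)) j)

theorem continuous_opCLM {m n : ℕ} : Continuous (opCLM : Matrix (Fin m) (Fin n) ℝ → _) :=
  (Matrix.toEuclideanLin.trans LinearMap.toContinuousLinearMap :
    Matrix (Fin m) (Fin n) ℝ ≃ₗ[ℝ] _).toLinearMap.continuous_of_finiteDimensional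

theorem covMat_self_eq {α : Type*} [MeasureSpace α] {n : ℕ} (g : α → Fin n → ℝ) :
    covMat g g = Matrix.of (fun j k => ∫ ω, g ω j * g ω k)
      - vecMulVec (fun j => ∫ ω, g ω j) (fun j => ∫ ω, g ω j) :=
  rfl

theorem sampleCov_eq {α : Type*} {n N : ℕ} (X : Fin N → α → Fin n → ℝ) (ω : α) :
    sampleCov X ω = Matrix.of (fun j k => ensembleMean (fun i ω => X i ω j * X i ω k) ω)
      - vecMulVec (sampleMean X ω) (sampleMean X ω) := by
  ext j k
  simp [sampleCov, ensembleMean, vecMulVec_apply, Matrix.sum_apply]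

/-- convergence of the sample mean and sample covariance for nearly i.i.d.
exchangeable ensembles. If for each `N` the stacked ensemble `[X_N; U_N]` (of size `N + 1`)
is exchangeable, the members of `U_N` are i.i.d., `U_{N1} ∈ L⁴` with distribution independent
of `N`, and `‖X_{N1} − U_{N1}‖₄ → 0`, then the sample mean `X̄_N` converges in probability to
`E(U_{N1})` and the sample covariance `C(X_N)` converges in probability to `Cov(U_{N1})`. -/
theorem sampleMean_sampleCov_tendstoInMeasure_of_exchangeable
    {n : ℕ} (X U : (N : ℕ) → Fin (N + 1) → Ω → Fin n → ℝ)
    (hXmeas : ∀ N i, Measurable (X N i)) (hUmeas : ∀ N i, Measurable (U N i))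
    (hex : ∀ N, Exchangeable (fun i ω => (X N i ω, U N i ω)))
    (hUindep : ∀ N, iIndepFun (U N) ℙ)
    (hUid : ∀ (N M : ℕ) (i : Fin (N + 1)),
      Measure.map (U N i) (ℙ : Measure Ω) = Measure.map (U M 0) (ℙ : Measure Ω))
    (hUL4 : ∀ N, MemLp (fun ω => toEuc (U N 0 ω)) 4 ℙ)
    (hXU : Tendsto (fun N => vLp 4 (fun ω => X N 0 ω - U N 0 ω)) atTop (nhds 0)) :
    TendstoInMeasure ℙ (fun N => sampleMean (X N)) atTop (fun _ => ∫ ω, U 0 0 ω) ∧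
      TendstoInMeasure ℙ (fun N ω => opCLM (sampleCov (X N) ω)) atTop
        (fun _ => opCLM (covMat (U 0 0) (U 0 0))) := by
  have hpair : ∀ N i, IdentDistrib (fun ω => (X N i ω, U N i ω))
      (fun ω => (X N 0 ω, U N 0 ω)) ℙ ℙ := fun N i =>
    (hex N).identDistrib (fun i => (hXmeas N i).prodMk (hUmeas N i)) i 0
  have hident : ∀ N i, IdentDistrib (U N i) (U 0 0) ℙ ℙ := fun N i =>
    ⟨(hUmeas N i).aemeasurable, (hUmeas 0 0).aemeasurable, hUid N 0 i⟩
  have hg : ∀ j, MemLp (fun ω => U 0 0 ω j) 4 ℙ := fun j =>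
    (EuclideanSpace.proj (𝕜 := ℝ) j).comp_memLp' (hUL4 0)
  have hXUcoord : ∀ p ≤ 4, ∀ j,
      Tendsto (fun N => eLpNorm (fun ω => X N 0 ω j - U N 0 ω j) p ℙ) atTop (nhds 0) :=
    fun p hp j => tendsto_of_tendsto_of_tendsto_of_le_of_le tendsto_const_nhds hXU
      (fun _ => zero_le) fun N =>
        eLpNorm_apply_le_vLp ((hXmeas N 0).sub (hUmeas N 0)) (by simpa using hp) j
  have hmean := tendstoInMeasure_sampleMean_of_identDistrib_pairs hpair hUindep hident
    (fun j => (hg j).mono_exponent (by norm_num)) (hXUcoord 1 (by norm_num))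
  have hsecond := tendstoInMeasure_secondMoment_of_identDistrib_pairs hpair hUindep hident hg
    (hXUcoord 2 (by norm_num))
  have hint : ∫ ω, U 0 0 ω = fun j => ∫ ω, U 0 0 ω j :=
    funext (eval_integral fun j => (hg j).integrable (by norm_num))
  refine ⟨hint ▸ hmean, ?_⟩
  have hφ : Continuous fun p : (Fin n → ℝ) × (Fin n → Fin n → ℝ) =>
      opCLM (Matrix.of p.2 - vecMulVec p.1 p.1) :=
    continuous_opCLM.comp (continuous_snd.sub (continuous_fst.matrix_vecMulVec continuous_fst))
  simpa only [sampleCov_eq, covMat_self_eq, ← hint] using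
    (hmean.prodMk hsecond).comp_continuousAt hφ.continuousAt
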